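/- arXiv:2407.12527 — 2 statements merged into one kernel-verified Lean document; each statement's English description precedes it below -/
import Mathlib

section
/- For the transport solution operator A_μ on L²([x_L,x_R]; σ_T dx) given by A_μ(φ)(x) = (1/μ) ∫_{x_L}^x exp(-(1/μ)∫_y^x σ_T(z)dz) σ_r(y)φ(y) dy with μ > 0, the derivative in μ satisfies the operator norm bound ‖∂_μ A_μ‖ ≤ (1/μ)(1 + ‖σ_T/σ_r‖_∞). -/
/-!
Write `A_c` for `transportOp σT σr xL c`. It solves `c u' + σT u = σr g`, `u(xL) = 0`, so
integrating `σT A_c q = σr q - c (A_c q)'` and using `σr ≤ σT` gives `∫ σT A_c q ≤ ∫ σT q` for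
`q ≥ 0`. Cauchy–Schwarz against the kernel, whose mass `A_c 1` is at most `1`, gives
`(A_c g)² ≤ A_c (g²)`; combining the two, `‖A_c‖ ≤ 1` on `L²(σT dx)`.

Differentiating under the integral, `∂_μ A_μ g` has kernel `μ⁻² e^{-t} (t - 1) σr` with
`t = μ⁻¹ ∫_y^x σT ≥ 0`, and `e^{-t} |t - 1| ≤ e^{-t/2}` bounds it pointwise by
`(2/μ) A_{2μ} |g|`. Hence `‖∂_μ A_μ‖ ≤ 2/μ ≤ (1 + M)/μ`, as `M ≥ 1` because `σr ≤ σT`.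
-/

open MeasureTheory intervalIntegral Real

theorem sq_integral_mul_le_integral_mul_integral_mul_sq {α : Type*} [MeasurableSpace α]
    {μ : Measure α} {w g : α → ℝ} (hw : 0 ≤ᵐ[μ] w) (hw_int : Integrable w μ)
    (hwg : Integrable (fun a => w a * g a) μ) (hwg2 : Integrable (fun a => w a * g a ^ 2) μ) :
    (∫ a, w a * g a ∂μ) ^ 2 ≤ (∫ a, w a ∂μ) * ∫ a, w a * g a ^ 2 ∂μ := by
  have hquad : ∀ t : ℝ, 0 ≤ (∫ a, w a ∂μ) * (t * t) + 2 * (∫ a, w a * g a ∂μ) * t +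
      ∫ a, w a * g a ^ 2 ∂μ := fun t => by
    have hexpand : ∀ a, w a * (t + g a) ^ 2 =
        t * t * w a + (2 * t * (w a * g a) + w a * g a ^ 2) := fun a => by ring
    have h0 : 0 ≤ ∫ a, w a * (t + g a) ^ 2 ∂μ :=
      integral_nonneg_of_ae (hw.mono fun a ha => mul_nonneg ha (sq_nonneg (t + g a)))
    rw [funext hexpand, integral_add (hw_int.const_mul _) ((hwg.const_mul _).fun_add hwg2),
      integral_add (hwg.const_mul _) hwg2, MeasureTheory.integral_const_mul,
      MeasureTheory.integral_const_mul] at h0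
    linarith
  have hdisc := discrim_le_zero hquad
  rw [discrim] at hdisc
  nlinarith

theorem intervalIntegral.integral_mono_on_of_nonneg {f g : ℝ → ℝ} {a b : ℝ} (hab : a ≤ b)
    (hg : IntervalIntegrable g volume a b) (hf : ∀ x ∈ Set.Icc a b, 0 ≤ f x)
    (h : ∀ x ∈ Set.Icc a b, f x ≤ g x) : ∫ x in a..b, f x ≤ ∫ x in a..b, g x := by
  rw [integral_of_le hab, integral_of_le hab]
  refine integral_mono_of_nonneg ?_ hg.1 ?_ <;>
    rw [Filter.EventuallyLE, ae_restrict_iff' measurableSet_Ioc]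
  exacts [ae_of_all _ fun x hx => hf x (Set.Ioc_subset_Icc_self hx),
    ae_of_all _ fun x hx => h x (Set.Ioc_subset_Icc_self hx)]

theorem intervalIntegral.hasDerivAt_integral_of_continuousOn {F F' : ℝ → ℝ → ℝ} {x₀ ε a b : ℝ}
    (hε : 0 < ε) (hF : ∀ x ∈ Metric.ball x₀ ε, ContinuousOn (F x) (Set.uIcc a b))
    (hF' : ContinuousOn (Function.uncurry F') (Metric.closedBall x₀ ε ×ˢ Set.uIcc a b))
    (hdiff : ∀ x ∈ Metric.ball x₀ ε, ∀ t ∈ Set.uIcc a b, HasDerivAt (F · t) (F' x t) x) :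
    HasDerivAt (fun x => ∫ t in a..b, F x t) (∫ t in a..b, F' x₀ t) x₀ := by
  obtain ⟨C, hC⟩ :=
    ((isCompact_closedBall x₀ ε).prod isCompact_uIcc).exists_bound_of_continuousOn hF'
  have hF'₀ : ContinuousOn (F' x₀) (Set.uIcc a b) :=
    hF'.comp (continuousOn_const.prodMk continuousOn_id)
      fun t ht => ⟨Metric.mem_closedBall_self hε.le, ht⟩
  refine (hasDerivAt_integral_of_dominated_loc_of_deriv_le (bound := fun _ => C)
    (Metric.ball_mem_nhds x₀ hε) ?_ ?_ ?_ ?_ intervalIntegrable_const ?_).2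
  · filter_upwards [Metric.ball_mem_nhds x₀ hε] with x hx
    exact ((hF x hx).mono Set.uIoc_subset_uIcc).aestronglyMeasurable measurableSet_uIoc
  · exact (hF x₀ (Metric.mem_ball_self hε)).intervalIntegrable
  · exact (hF'₀.mono Set.uIoc_subset_uIcc).aestronglyMeasurable measurableSet_uIoc
  · exact ae_of_all _ fun t ht x hx =>
      hC (x, t) ⟨Metric.ball_subset_closedBall hx, Set.uIoc_subset_uIcc ht⟩
  · exact ae_of_all _ fun t ht x hx => hdiff x hx t (Set.uIoc_subset_uIcc ht)

theorem ContinuousOn.exists_continuous_eqOn_Icc {f : ℝ → ℝ} {a b : ℝ} (hab : a ≤ b)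
    (hf : ContinuousOn f (Set.Icc a b)) : ∃ g : ℝ → ℝ, Continuous g ∧ Set.EqOn g f (Set.Icc a b) :=
  ⟨Set.IccExtend hab ((Set.Icc a b).domRestrict f), hf.domRestrict.Icc_extend',
    fun _ hx => Set.IccExtend_of_mem hab _ hx⟩

@[fun_prop]
theorem intervalIntegral.continuous_integral_left {f : ℝ → ℝ} (hf : Continuous f) (b : ℝ) :
    Continuous fun a => ∫ x in a..b, f x :=
  (by fun_prop : Continuous fun a => -∫ x in b..a, f x).congr fun a => (integral_symm b a).symm

theorem exp_neg_mul_abs_sub_one_le {t : ℝ} (ht : 0 ≤ t) : exp (-t) * |t - 1| ≤ exp (-(t / 2)) := by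
  have habs : |t - 1| ≤ exp (t / 2) := by
    have hsq : (1 + t / 4) ^ 2 ≤ exp (t / 2) := by
      rw [show t / 2 = t / 4 + t / 4 by ring, exp_add]
      have := add_one_le_exp (t / 4)
      nlinarith
    have := one_le_exp (show 0 ≤ t / 2 by linarith)
    rcases abs_cases (t - 1) with ⟨h, _⟩ | ⟨h, _⟩ <;> rw [h] <;> nlinarith [sq_nonneg (t / 4 - 1)]
  calc exp (-t) * |t - 1| ≤ exp (-t) * exp (t / 2) := by gcongr
    _ = exp (-(t / 2)) := by rw [← exp_add]; ring_nf

/-- The transport solution operator `A_μ`. -/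
noncomputable def transportOp (σT σr : ℝ → ℝ) (xL μ : ℝ) (g : ℝ → ℝ) (x : ℝ) : ℝ :=
  (1 / μ) * ∫ y in xL..x, exp (-(1 / μ) * ∫ z in y..x, σT z) * (σr y * g y)

section TransportOp

open Set

variable {σT σr g : ℝ → ℝ} {xL xR c μ x : ℝ}

theorem transportOp_eq_exp_mul_integral (hσT : Continuous σT) (σr g : ℝ → ℝ) (xL c x : ℝ) :
    transportOp σT σr xL c g x = (1 / c) * exp (-(1 / c) * ∫ z in xL..x, σT z) *
      ∫ y in xL..x, exp ((1 / c) * ∫ z in xL..y, σT z) * (σr y * g y) := by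
  rw [transportOp, mul_assoc,
    ← intervalIntegral.integral_const_mul (exp (-(1 / c) * ∫ z in xL..x, σT z))]
  congr 1
  refine integral_congr fun y _ => ?_
  rw [← integral_interval_sub_left (hσT.intervalIntegrable xL x) (hσT.intervalIntegrable xL y),
    mul_sub, sub_eq_add_neg, exp_add]
  ring_nf

@[simp]
theorem transportOp_left (σT σr g : ℝ → ℝ) (xL c : ℝ) : transportOp σT σr xL c g xL = 0 := by
  simp [transportOp]

theorem transportOp_nonneg (hc : 0 < c) (hx : xL ≤ x) (h : ∀ y ∈ Icc xL x, 0 ≤ σr y * g y) :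
    0 ≤ transportOp σT σr xL c g x :=
  mul_nonneg (by positivity) (integral_nonneg hx fun y hy => mul_nonneg (exp_pos _).le (h y hy))

theorem hasDerivAt_transportOp (hσT : Continuous σT) (hσr : Continuous σr) (hg : Continuous g)
    (xL x : ℝ) :
    HasDerivAt (transportOp σT σr xL c g)
      ((σr x * g x - σT x * transportOp σT σr xL c g x) / c) x := by
  have hT : HasDerivAt (fun u => ∫ z in xL..u, σT z) (σT x) x :=
    (hσT.integral_hasStrictDerivAt xL x).hasDerivAt
  have hR : HasDerivAt (fun u => ∫ y in xL..u, exp ((1 / c) * ∫ z in xL..y, σT z) * (σr y * g y))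
      (exp ((1 / c) * ∫ z in xL..x, σT z) * (σr x * g x)) x :=
    ((by fun_prop : Continuous fun y => exp ((1 / c) * ∫ z in xL..y, σT z) * (σr y * g y)
      ).integral_hasStrictDerivAt xL x).hasDerivAt
  rw [funext (transportOp_eq_exp_mul_integral hσT σr g xL c)]
  refine ((((hT.const_mul (-(1 / c))).exp).const_mul (1 / c)).fun_mul hR).congr_deriv ?_
  have hinv : exp (-(1 / c) * ∫ z in xL..x, σT z) * exp ((1 / c) * ∫ z in xL..x, σT z) = 1 := by
    rw [← exp_add]; simp
  linear_combination (σr x * g x / c) * hinv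

theorem continuous_transportOp (hσT : Continuous σT) (hσr : Continuous σr) (hg : Continuous g) :
    Continuous (transportOp σT σr xL c g) :=
  continuous_iff_continuousAt.2 fun x => (hasDerivAt_transportOp hσT hσr hg xL x).continuousAt

theorem transportOp_self_one (hσT : Continuous σT) (hc : c ≠ 0) (xL x : ℝ) :
    transportOp σT σT xL c (fun _ => 1) x = 1 - exp (-(1 / c) * ∫ z in xL..x, σT z) := by
  have hprim : ∀ y, HasDerivAt (fun u => c * exp ((1 / c) * ∫ z in xL..u, σT z))
      (exp ((1 / c) * ∫ z in xL..y, σT z) * (σT y * 1)) y := fun y => by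
    refine (((((hσT.integral_hasStrictDerivAt xL y).hasDerivAt).const_mul (1 / c)).exp).const_mul
      c).congr_deriv ?_
    field_simp
  rw [transportOp_eq_exp_mul_integral hσT, integral_eq_sub_of_hasDerivAt (fun y _ => hprim y)
    ((by fun_prop : Continuous fun y => exp ((1 / c) * ∫ z in xL..y, σT z) * (σT y * 1)
      ).intervalIntegrable _ _)]
  have hinv : exp (-(1 / c) * ∫ z in xL..x, σT z) * exp ((1 / c) * ∫ z in xL..x, σT z) = 1 := by
    rw [← exp_add]; simp
  have hk : 1 / c * c = 1 := one_div_mul_cancel hc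
  simp only [integral_same, mul_zero, exp_zero]
  linear_combination (1 / c * c) * hinv + (1 - exp (-(1 / c) * ∫ z in xL..x, σT z)) * hk

theorem transportOp_one_le_one (hσT : Continuous σT) (hσr : Continuous σr) (hc : 0 < c)
    (hx : xL ≤ x) (hle : ∀ y ∈ Icc xL x, σr y ≤ σT y) :
    transportOp σT σr xL c (fun _ => 1) x ≤ 1 :=
  calc transportOp σT σr xL c (fun _ => 1) x ≤ transportOp σT σT xL c (fun _ => 1) x := by
        refine mul_le_mul_of_nonneg_left (integral_mono_on hx ?_ ?_ fun y hy => ?_) (by positivity)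
        · exact (by fun_prop : Continuous _).intervalIntegrable _ _
        · exact (by fun_prop : Continuous _).intervalIntegrable _ _
        · simpa using mul_le_mul_of_nonneg_left (hle y hy) (exp_pos _).le
    _ = 1 - exp (-(1 / c) * ∫ z in xL..x, σT z) := transportOp_self_one hσT hc.ne' xL x
    _ ≤ 1 := sub_le_self _ (exp_pos _).le

theorem sq_transportOp_le (hσT : Continuous σT) (hσr : Continuous σr) (hg : Continuous g)
    (hc : 0 < c) (hx : xL ≤ x) (hσr0 : ∀ y ∈ Icc xL x, 0 ≤ σr y)
    (hle : ∀ y ∈ Icc xL x, σr y ≤ σT y) :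
    transportOp σT σr xL c g x ^ 2 ≤ transportOp σT σr xL c (fun y => g y ^ 2) x := by
  set w := fun y => exp (-(1 / c) * ∫ z in y..x, σT z) * σr y
  have hw : Continuous w := by fun_prop
  have hA : ∀ f : ℝ → ℝ, transportOp σT σr xL c f x = 1 / c * ∫ y in Ioc xL x, w y * f y :=
    fun f => by simp only [transportOp, integral_of_le hx, w, mul_assoc]
  have hcs := sq_integral_mul_le_integral_mul_integral_mul_sq (μ := volume.restrict (Ioc xL x))
    (w := w) (g := g)
    ((ae_restrict_iff' measurableSet_Ioc).2 (ae_of_all _ fun y hy =>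
      mul_nonneg (exp_pos _).le (hσr0 y (Ioc_subset_Icc_self hy))))
    hw.integrableOn_Ioc (hw.mul hg).integrableOn_Ioc (hw.mul (hg.pow 2)).integrableOn_Ioc
  have hmass : 1 / c * ∫ y in Ioc xL x, w y ≤ 1 := by
    simpa only [hA, mul_one] using transportOp_one_le_one hσT hσr hc hx hle
  have hA2 : 0 ≤ 1 / c * ∫ y in Ioc xL x, w y * g y ^ 2 :=
    hA (fun y => g y ^ 2) ▸
      transportOp_nonneg hc hx fun y hy => mul_nonneg (hσr0 y hy) (sq_nonneg _)
  rw [hA, hA]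
  calc (1 / c * ∫ y in Ioc xL x, w y * g y) ^ 2
      = (1 / c) ^ 2 * (∫ y in Ioc xL x, w y * g y) ^ 2 := by ring
    _ ≤ (1 / c) ^ 2 * ((∫ y in Ioc xL x, w y) * ∫ y in Ioc xL x, w y * g y ^ 2) := by gcongr
    _ = (1 / c * ∫ y in Ioc xL x, w y) * (1 / c * ∫ y in Ioc xL x, w y * g y ^ 2) := by ring
    _ ≤ 1 * (1 / c * ∫ y in Ioc xL x, w y * g y ^ 2) := by gcongr
    _ = _ := one_mul _

theorem integral_weight_mul_transportOp_le (hσT : Continuous σT) (hσr : Continuous σr)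
    (hg : Continuous g) (hc : 0 < c) (hxR : xL ≤ xR) (hσr0 : ∀ y ∈ Icc xL xR, 0 ≤ σr y)
    (hle : ∀ y ∈ Icc xL xR, σr y ≤ σT y) (hg0 : ∀ y ∈ Icc xL xR, 0 ≤ g y) :
    ∫ x in xL..xR, σT x * transportOp σT σr xL c g x ≤ ∫ x in xL..xR, σT x * g x := by
  set u := transportOp σT σr xL c g
  have hu : Continuous u := continuous_transportOp hσT hσr hg
  have hftc : ∫ x in xL..xR, (σr x * g x - σT x * u x) / c = u xR - u xL :=
    integral_eq_sub_of_hasDerivAt (fun x _ => hasDerivAt_transportOp hσT hσr hg xL x)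
      ((by fun_prop : Continuous fun x => (σr x * g x - σT x * u x) / c).intervalIntegrable _ _)
  have hsplit : ∫ x in xL..xR, σT x * u x = (∫ x in xL..xR, σr x * g x) - c * (u xR - u xL) := by
    rw [← hftc, ← intervalIntegral.integral_const_mul,
      ← integral_sub ((by fun_prop : Continuous fun x => σr x * g x).intervalIntegrable _ _)
        ((by fun_prop : Continuous fun x => c * ((σr x * g x - σT x * u x) / c)
          ).intervalIntegrable _ _)]
    refine integral_congr fun x _ => ?_
    field_simp
    ring
  have huR : 0 ≤ u xR := transportOp_nonneg hc hxR fun y hy => mul_nonneg (hσr0 y hy) (hg0 y hy)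
  calc ∫ x in xL..xR, σT x * u x ≤ ∫ x in xL..xR, σr x * g x := by
        rw [hsplit, show u xL = 0 from transportOp_left _ _ _ _ _]
        linarith [mul_nonneg hc.le huR]
    _ ≤ ∫ x in xL..xR, σT x * g x :=
        integral_mono_on hxR ((by fun_prop : Continuous _).intervalIntegrable _ _)
          ((by fun_prop : Continuous _).intervalIntegrable _ _)
          fun y hy => mul_le_mul_of_nonneg_right (hle y hy) (hg0 y hy)

theorem integral_weight_mul_sq_transportOp_le (hσT : Continuous σT) (hσr : Continuous σr)
    (hg : Continuous g) (hc : 0 < c) (hxR : xL ≤ xR) (hσr0 : ∀ y ∈ Icc xL xR, 0 ≤ σr y)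
    (hle : ∀ y ∈ Icc xL xR, σr y ≤ σT y) :
    ∫ x in xL..xR, σT x * transportOp σT σr xL c g x ^ 2 ≤ ∫ x in xL..xR, σT x * g x ^ 2 :=
  calc ∫ x in xL..xR, σT x * transportOp σT σr xL c g x ^ 2
      ≤ ∫ x in xL..xR, σT x * transportOp σT σr xL c (fun y => g y ^ 2) x := by
        have hA := continuous_transportOp (xL := xL) (c := c) hσT hσr hg
        have hA2 := continuous_transportOp (xL := xL) (c := c) hσT hσr (hg.pow 2)
        refine integral_mono_on hxR ((by fun_prop : Continuous _).intervalIntegrable _ _)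
          ((by fun_prop : Continuous _).intervalIntegrable _ _) fun x hx => ?_
        have hsub : Icc xL x ⊆ Icc xL xR := Icc_subset_Icc_right hx.2
        exact mul_le_mul_of_nonneg_left
          (sq_transportOp_le hσT hσr hg hc hx.1 (fun y hy => hσr0 y (hsub hy))
            fun y hy => hle y (hsub hy))
          ((hσr0 x hx).trans (hle x hx))
    _ ≤ ∫ x in xL..xR, σT x * g x ^ 2 :=
        integral_weight_mul_transportOp_le hσT hσr (hg.pow 2) hc hxR hσr0 hle
          fun y _ => sq_nonneg _

theorem hasDerivAt_transportOp_param (hσT : Continuous σT) (hσr : Continuous σr)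
    (hg : Continuous g) (hμ : 0 < μ) (xL x : ℝ) :
    HasDerivAt (fun ν => transportOp σT σr xL ν g x)
      (1 / μ ^ 2 * ∫ y in xL..x, exp (-(1 / μ) * ∫ z in y..x, σT z) *
        (1 / μ * (∫ z in y..x, σT z) - 1) * (σr y * g y)) μ := by
  set S := fun y => ∫ z in y..x, σT z
  have hS : Continuous S := continuous_integral_left hσT x
  have hball : ∀ p ∈ Metric.closedBall μ (μ / 2) ×ˢ uIcc xL x, p.1 ≠ 0 := fun p hp => by
    have := abs_sub_le_iff.1 (Metric.mem_closedBall.1 hp.1)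
    linarith
  have hball2 : ∀ p ∈ Metric.closedBall μ (μ / 2) ×ˢ uIcc xL x, p.1 ^ 2 ≠ 0 :=
    fun p hp => pow_ne_zero _ (hball p hp)
  have hI : HasDerivAt (fun ν => ∫ y in xL..x, exp (-(1 / ν) * S y) * (σr y * g y))
      (∫ y in xL..x, exp (-(1 / μ) * S y) * (S y / μ ^ 2) * (σr y * g y)) μ := by
    refine hasDerivAt_integral_of_continuousOn
      (F := fun ν y => exp (-(1 / ν) * S y) * (σr y * g y))
      (F' := fun ν y => exp (-(1 / ν) * S y) * (S y / ν ^ 2) * (σr y * g y))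
      (half_pos hμ) (fun ν _ => by fun_prop)
      (by fun_prop (disch := assumption)) fun ν hν y _ => ?_
    have hν : ν ≠ 0 := by
      have := abs_sub_lt_iff.1 (Metric.mem_ball.1 hν)
      linarith
    have hexponent : HasDerivAt (fun ν : ℝ => -(1 / ν) * S y) (S y / ν ^ 2) ν := by
      rw [show (fun ν : ℝ => -(1 / ν) * S y) = fun ν => -S y * ν⁻¹ from funext fun ν => by ring]
      exact ((hasDerivAt_inv hν).const_mul _).congr_deriv (by field_simp)
    exact hexponent.exp.mul_const _
  have hinv : HasDerivAt (fun ν : ℝ => 1 / ν) (-(μ ^ 2)⁻¹) μ := by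
    simpa only [one_div] using hasDerivAt_inv hμ.ne'
  refine (hinv.fun_mul hI).congr_deriv ?_
  show _ = 1 / μ ^ 2 * ∫ y in xL..x, exp (-(1 / μ) * S y) * (1 / μ * S y - 1) * (σr y * g y)
  rw [← intervalIntegral.integral_const_mul, ← intervalIntegral.integral_const_mul,
    ← intervalIntegral.integral_const_mul,
    ← integral_add ((by fun_prop : Continuous _).intervalIntegrable _ _)
      ((by fun_prop : Continuous _).intervalIntegrable _ _)]
  refine integral_congr fun y _ => ?_
  field_simp
  ring

theorem abs_le_of_hasDerivAt_transportOp_param (hσT : Continuous σT) (hσr : Continuous σr)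
    (hg : Continuous g) (hμ : 0 < μ) (hx : xL ≤ x) (hσr0 : ∀ y ∈ Icc xL x, 0 ≤ σr y)
    (hσT0 : ∀ y ∈ Icc xL x, 0 ≤ σT y) {d : ℝ}
    (hd : HasDerivAt (fun ν => transportOp σT σr xL ν g x) d μ) :
    |d| ≤ 2 / μ * transportOp σT σr xL (2 * μ) (fun y => |g y|) x := by
  rw [hd.unique (hasDerivAt_transportOp_param hσT hσr hg hμ xL x), abs_mul,
    abs_of_pos (by positivity)]
  set S := fun y => ∫ z in y..x, σT z
  have hS : Continuous S := continuous_integral_left hσT x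
  calc 1 / μ ^ 2 * |∫ y in xL..x, exp (-(1 / μ) * S y) * (1 / μ * S y - 1) * (σr y * g y)|
      ≤ 1 / μ ^ 2 * ∫ y in xL..x, exp (-(1 / (2 * μ)) * S y) * (σr y * |g y|) := by
        gcongr
        refine (abs_integral_le_integral_abs hx).trans
          (integral_mono_on hx ((by fun_prop : Continuous _).intervalIntegrable _ _)
            ((by fun_prop : Continuous _).intervalIntegrable _ _) fun y hy => ?_)
        have hSy : 0 ≤ 1 / μ * S y := mul_nonneg (by positivity)
          (integral_nonneg hy.2 fun z hz => hσT0 z ⟨hy.1.trans hz.1, hz.2⟩)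
        calc |exp (-(1 / μ) * S y) * (1 / μ * S y - 1) * (σr y * g y)|
            = exp (-(1 / μ * S y)) * |1 / μ * S y - 1| * (σr y * |g y|) := by
              rw [abs_mul, abs_mul, abs_mul, abs_of_nonneg (exp_pos _).le,
                abs_of_nonneg (hσr0 y hy), neg_mul]
          _ ≤ exp (-(1 / μ * S y / 2)) * (σr y * |g y|) := by
              gcongr
              · exact mul_nonneg (hσr0 y hy) (abs_nonneg _)
              · exact exp_neg_mul_abs_sub_one_le hSy
          _ = exp (-(1 / (2 * μ)) * S y) * (σr y * |g y|) := by ring_nf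
    _ = 2 / μ * transportOp σT σr xL (2 * μ) (fun y => |g y|) x := by
        simp only [transportOp, S]
        field_simp

theorem transportOp_congr {σT' σr' g' : ℝ → ℝ} (hx : xL ≤ x) (hσT : EqOn σT σT' (Icc xL x))
    (hσr : EqOn σr σr' (Icc xL x)) (hg : EqOn g g' (Icc xL x)) (c : ℝ) :
    transportOp σT σr xL c g x = transportOp σT' σr' xL c g' x := by
  unfold transportOp
  congr 1
  refine integral_congr fun y hy => ?_
  rw [uIcc_of_le hx] at hy
  have hS : ∫ z in y..x, σT z = ∫ z in y..x, σT' z := integral_congr fun z hz => by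
    rw [uIcc_of_le hy.2] at hz
    exact hσT ⟨hy.1.trans hz.1, hz.2⟩
  rw [hS, hσr hy, hg hy]

theorem integral_weight_mul_sq_le_of_hasDerivAt_transportOp_param (hσT : Continuous σT)
    (hσr : Continuous σr) (hg : Continuous g) (hμ : 0 < μ) (hxR : xL ≤ xR)
    (hσr0 : ∀ y ∈ Icc xL xR, 0 ≤ σr y) (hle : ∀ y ∈ Icc xL xR, σr y ≤ σT y) {d : ℝ → ℝ}
    (hd : ∀ x ∈ Icc xL xR, HasDerivAt (fun ν => transportOp σT σr xL ν g x) (d x) μ) :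
    ∫ x in xL..xR, σT x * d x ^ 2 ≤ (2 / μ) ^ 2 * ∫ x in xL..xR, σT x * g x ^ 2 := by
  have hσT0 : ∀ y ∈ Icc xL xR, 0 ≤ σT y := fun y hy => (hσr0 y hy).trans (hle y hy)
  set A := transportOp σT σr xL (2 * μ) (fun y => |g y|)
  have hA : Continuous A := continuous_transportOp hσT hσr hg.abs
  calc ∫ x in xL..xR, σT x * d x ^ 2 ≤ ∫ x in xL..xR, (2 / μ) ^ 2 * (σT x * A x ^ 2) := by
        refine integral_mono_on_of_nonneg hxR ((by fun_prop : Continuous _).intervalIntegrable _ _)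
          (fun x hx => mul_nonneg (hσT0 x hx) (sq_nonneg _)) fun x hx => ?_
        have hsub : Icc xL x ⊆ Icc xL xR := Icc_subset_Icc_right hx.2
        have hdx := abs_le_of_hasDerivAt_transportOp_param hσT hσr hg hμ hx.1
          (fun y hy => hσr0 y (hsub hy)) (fun y hy => hσT0 y (hsub hy)) (hd x hx)
        calc σT x * d x ^ 2 ≤ σT x * (2 / μ * A x) ^ 2 :=
              mul_le_mul_of_nonneg_left (sq_le_sq' (abs_le.1 hdx).1 (abs_le.1 hdx).2) (hσT0 x hx)
          _ = (2 / μ) ^ 2 * (σT x * A x ^ 2) := by ring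
    _ = (2 / μ) ^ 2 * ∫ x in xL..xR, σT x * A x ^ 2 := intervalIntegral.integral_const_mul _ _
    _ ≤ (2 / μ) ^ 2 * ∫ x in xL..xR, σT x * |g x| ^ 2 := by
        gcongr
        exact integral_weight_mul_sq_transportOp_le hσT hσr hg.abs (by positivity) hxR hσr0 hle
    _ = (2 / μ) ^ 2 * ∫ x in xL..xR, σT x * g x ^ 2 := by simp_rw [sq_abs]

end TransportOp

theorem one_le_sSup_image_div {σT σr : ℝ → ℝ} {a b : ℝ} (hab : a ≤ b)
    (hσT : ContinuousOn σT (Set.Icc a b)) (hσr : ContinuousOn σr (Set.Icc a b))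
    (hpos : ∀ x ∈ Set.Icc a b, 0 < σr x) (hle : ∀ x ∈ Set.Icc a b, σr x ≤ σT x) :
    1 ≤ sSup ((fun x => σT x / σr x) '' Set.Icc a b) := by
  have ha : a ∈ Set.Icc a b := Set.left_mem_Icc.2 hab
  refine ((one_le_div (hpos a ha)).2 (hle a ha)).trans (le_csSup ?_ ⟨a, ha, rfl⟩)
  exact (isCompact_Icc.image_of_continuousOn
    (hσT.div hσr fun x hx => (hpos x hx).ne')).bddAbove

/-- for the transport solution operator `A_μ` (given pointwise by the
integral formula below), the derivative of `μ ↦ A_μ φ` in `μ` has weighted-`L²`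
norm at most `(1/μ)(1 + ‖σ_T/σ_r‖_∞)` times that of `φ`; this is the operator
norm bound `‖∂_μ A_μ‖ ≤ (1/μ)(1 + ‖σ_T/σ_r‖_∞)`. -/
theorem stmt1 (xL xR : ℝ) (hx : xL < xR) (μ : ℝ) (hμ : 0 < μ)
    (σT σr : ℝ → ℝ)
    (hσT : ContinuousOn σT (Set.Icc xL xR))
    (hσr : ContinuousOn σr (Set.Icc xL xR))
    (hpos : ∀ x ∈ Set.Icc xL xR, 0 < σr x)
    (hle : ∀ x ∈ Set.Icc xL xR, σr x ≤ σT x)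
    (M : ℝ) (hM : M = sSup ((fun x => σT x / σr x) '' Set.Icc xL xR))
    (φ : ℝ → ℝ) (hφ : ContinuousOn φ (Set.Icc xL xR))
    (ψ : ℝ → ℝ → ℝ)
    (hψ : ∀ ν > 0, ∀ x ∈ Set.Icc xL xR,
      ψ ν x = (1 / ν) * ∫ y in xL..x,
        Real.exp (-(1 / ν) * ∫ z in y..x, σT z) * (σr y * φ y))
    (dψ : ℝ → ℝ)
    (hdψ : ∀ x ∈ Set.Icc xL xR, HasDerivAt (fun ν => ψ ν x) (dψ x) μ) :
    Real.sqrt (∫ x in xL..xR, σT x * (dψ x) ^ 2) ≤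
      (1 / μ) * (1 + M) * Real.sqrt (∫ x in xL..xR, σT x * (φ x) ^ 2) := by
  obtain ⟨σT', hσT'c, hσT'⟩ := hσT.exists_continuous_eqOn_Icc hx.le
  obtain ⟨σr', hσr'c, hσr'⟩ := hσr.exists_continuous_eqOn_Icc hx.le
  obtain ⟨φ', hφ'c, hφ'⟩ := hφ.exists_continuous_eqOn_Icc hx.le
  have hd : ∀ x ∈ Set.Icc xL xR,
      HasDerivAt (fun ν => transportOp σT' σr' xL ν φ' x) (dψ x) μ := fun x hx' => by
    have hsub : Set.Icc xL x ⊆ Set.Icc xL xR := Set.Icc_subset_Icc_right hx'.2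
    refine (hdψ x hx').congr_of_eventuallyEq ?_
    filter_upwards [Ioi_mem_nhds hμ] with ν hν
    rw [hψ ν hν x hx']
    exact transportOp_congr hx'.1 (hσT'.mono hsub) (hσr'.mono hsub) (hφ'.mono hsub) ν
  have hbound := integral_weight_mul_sq_le_of_hasDerivAt_transportOp_param hσT'c hσr'c hφ'c hμ
    hx.le (fun y hy => hσr' hy ▸ (hpos y hy).le) (fun y hy => hσr' hy ▸ hσT' hy ▸ hle y hy) hd
  have hweight : ∀ f : ℝ → ℝ, ∫ x in xL..xR, σT x * f x = ∫ x in xL..xR, σT' x * f x :=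
    fun f => integral_congr fun x hx' => by rw [hσT' (Set.uIcc_of_le hx.le ▸ hx')]
  have hφ2 : ∫ x in xL..xR, σT' x * φ x ^ 2 = ∫ x in xL..xR, σT' x * φ' x ^ 2 :=
    integral_congr fun x hx' => by rw [hφ' (Set.uIcc_of_le hx.le ▸ hx')]
  rw [hweight, hweight, hφ2]
  have hM1 : 1 ≤ M := hM ▸ one_le_sSup_image_div hx.le hσT hσr hpos hle
  calc Real.sqrt (∫ x in xL..xR, σT' x * dψ x ^ 2)
      ≤ Real.sqrt ((2 / μ) ^ 2 * ∫ x in xL..xR, σT' x * φ' x ^ 2) := Real.sqrt_le_sqrt hbound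
    _ = 2 / μ * Real.sqrt (∫ x in xL..xR, σT' x * φ' x ^ 2) := by
        rw [Real.sqrt_mul (by positivity), Real.sqrt_sq (by positivity)]
    _ ≤ 1 / μ * (1 + M) * Real.sqrt (∫ x in xL..xR, σT' x * φ' x ^ 2) := by
        gcongr
        rw [div_eq_mul_one_div, mul_comm]
        gcongr
        linarith
end

section
/- For μ > 0, the operator A_μ on L²([x_L,x_R]; σ_T dx) is compact, A_μ*A_μ and A_μA_μ* are trace class with equal traces, and tr(A_μ*A_μ) ≤ (1/μ)|x_R − x_L| · ‖σ_T‖_∞² · ‖σ_T⁻¹‖_∞. -/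
/-!
The kernel is bounded, so `A` is Hilbert–Schmidt. For any Hilbert basis `(bᵢ)`, Parseval applied
to the kernel slices `k(x, ·)` gives `∑ ‖A bᵢ‖² ≤ ∬ |k(x,y)|² dν(y) dν(x)`, and for fixed `y` the
integral in `x` is at most `1/(2μ)`, since `σ_T(x) exp(-(2/μ)∫_y^x σ_T)` is the derivative of
`-(μ/2) exp(-(2/μ)∫_y^x σ_T)`. Hence `∑ ‖A bᵢ‖² ≤ ν(ℝ)/(2μ) ≤ ‖σ_T‖_∞ |x_R - x_L|/(2μ)`, which is
below the stated constant because `‖σ_T‖_∞ ‖σ_T⁻¹‖_∞ ≥ 1`.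

A Hilbert–Schmidt operator is the norm limit of its finite-rank truncations, hence compact. The
traces of `A*A` and `AA*` are `∑ ‖A bᵢ‖²` and `∑ ‖A* bᵢ‖²`, which agree because both equal
`∑ᵢ ∑ⱼ ⟪bⱼ, A bᵢ⟫²`.
-/

open MeasureTheory intervalIntegral Real ContinuousLinearMap Set
open scoped RealInnerProductSpace ENNReal

theorem tsum_norm_sq_eq_toReal_tsum_enorm_sq {ι G : Type*} [SeminormedAddCommGroup G]
    (f : ι → G) : ∑' i, ‖f i‖ ^ 2 = (∑' i, ‖f i‖ₑ ^ 2).toReal := by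
  rw [ENNReal.tsum_toReal_eq fun i => by finiteness]
  simp [ENNReal.toReal_pow]

theorem isCompactOperator_innerSL_smulRight {E F : Type*} [NormedAddCommGroup E]
    [InnerProductSpace ℝ E] [NormedAddCommGroup F] [NormedSpace ℝ F] (u : E) (v : F) :
    IsCompactOperator ((innerSL ℝ u).smulRight v) :=
  (isCompactOperator_of_locallyCompactSpace_rng
    ((ContinuousLinearMap.id ℝ ℝ).smulRight v)).comp_clm (innerSL ℝ u)

namespace HilbertBasis

variable {ι κ E F : Type*} [NormedAddCommGroup E] [InnerProductSpace ℝ E]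
  [NormedAddCommGroup F] [InnerProductSpace ℝ F]

theorem tsum_enorm_inner_sq (b : HilbertBasis ι ℝ E) (x : E) :
    ∑' i, ‖⟪b i, x⟫‖ₑ ^ 2 = ‖x‖ₑ ^ 2 := by
  have h : HasSum (fun i => ⟪b i, x⟫ ^ 2) (‖x‖ ^ 2) := by
    simpa only [sq, real_inner_comm x, real_inner_self_eq_norm_mul_norm]
      using b.hasSum_inner_mul_inner x x
  simp_rw [← enorm_pow, Real.enorm_of_nonneg (sq_nonneg _)]
  rw [← ENNReal.ofReal_tsum_of_nonneg (fun i => sq_nonneg _) h.summable, h.tsum_eq,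
    ← ofReal_norm, ENNReal.ofReal_pow (norm_nonneg x)]

variable [CompleteSpace E] [CompleteSpace F]

theorem tsum_enorm_adjoint_apply_sq (b : HilbertBasis ι ℝ E) (c : HilbertBasis κ ℝ F)
    (T : E →L[ℝ] F) : ∑' j, ‖adjoint T (c j)‖ₑ ^ 2 = ∑' i, ‖T (b i)‖ₑ ^ 2 := by
  calc ∑' j, ‖adjoint T (c j)‖ₑ ^ 2
        = ∑' j, ∑' i, ‖⟪b i, adjoint T (c j)⟫‖ₑ ^ 2 := by
        simp_rw [b.tsum_enorm_inner_sq]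
    _ = ∑' i, ∑' j, ‖⟪c j, T (b i)⟫‖ₑ ^ 2 := by
        rw [ENNReal.tsum_comm]
        simp_rw [adjoint_inner_right, real_inner_comm]
    _ = ∑' i, ‖T (b i)‖ₑ ^ 2 := by simp_rw [c.tsum_enorm_inner_sq]

theorem enorm_apply_sq_le (b : HilbertBasis ι ℝ E) (T : E →L[ℝ] F) (x : E) :
    ‖T x‖ₑ ^ 2 ≤ (∑' i, ‖T (b i)‖ₑ ^ 2) * ‖x‖ₑ ^ 2 := by
  obtain ⟨w, c, -⟩ := exists_hilbertBasis ℝ F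
  calc ‖T x‖ₑ ^ 2 = ∑' j, ‖⟪adjoint T (c j), x⟫‖ₑ ^ 2 := by
        simp_rw [adjoint_inner_left, c.tsum_enorm_inner_sq]
    _ ≤ ∑' j, ‖adjoint T (c j)‖ₑ ^ 2 * ‖x‖ₑ ^ 2 := by
        gcongr with j
        rw [← mul_pow]
        gcongr
        simpa only [enorm, ← ENNReal.coe_mul] using
          ENNReal.coe_le_coe.2 (nnnorm_inner_le_nnnorm (𝕜 := ℝ) (adjoint T (c j)) x)
    _ = (∑' i, ‖T (b i)‖ₑ ^ 2) * ‖x‖ₑ ^ 2 := by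
        rw [ENNReal.tsum_mul_right, b.tsum_enorm_adjoint_apply_sq c]

theorem opENorm_sq_le_tsum_enorm_sq (b : HilbertBasis ι ℝ E) (T : E →L[ℝ] F) :
    ‖T‖ₑ ^ 2 ≤ ∑' i, ‖T (b i)‖ₑ ^ 2 := by
  set S := ∑' i, ‖T (b i)‖ₑ ^ 2
  rcases eq_or_ne S ∞ with hS | hS
  · simp [hS]
  have hsq : ((NNReal.sqrt S.toNNReal : ℝ≥0∞)) ^ 2 = S := by
    rw [← ENNReal.coe_pow, NNReal.sq_sqrt, ENNReal.coe_toNNReal hS]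
  rw [← hsq]
  gcongr
  refine opENorm_le_bound _ fun x => ?_
  rw [← ENNReal.pow_le_pow_left_iff two_ne_zero, mul_pow, hsq]
  exact b.enorm_apply_sq_le T x

theorem isCompactOperator_of_tsum_enorm_sq_ne_top (b : HilbertBasis ι ℝ E) (T : E →L[ℝ] F)
    (hT : ∑' i, ‖T (b i)‖ₑ ^ 2 ≠ ∞) : IsCompactOperator T := by
  classical
  set P : Finset ι → E →L[ℝ] F := fun s => ∑ i ∈ s, (innerSL ℝ (b i)).smulRight (T (b i))
  have hP : ∀ s j, (T - P s) (b j) = if j ∈ s then 0 else T (b j) := by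
    intro s j
    simp only [P, sub_apply, sum_apply, smulRight_apply, innerSL_apply_apply,
      orthonormal_iff_ite.1 b.orthonormal, ite_smul, one_smul, zero_smul,
      Finset.sum_ite_eq']
    split_ifs <;> simp
  refine isCompactOperator_of_tendsto (l := Filter.atTop) (F := P) ?_ (.of_forall fun s =>
    Submodule.sum_mem (compactOperator _ E F) fun i _ => isCompactOperator_innerSL_smulRight _ _)
  rw [tendsto_iff_edist_tendsto_0, ENNReal.tendsto_nhds_zero]
  intro ε hε
  filter_upwards [ENNReal.tendsto_nhds_zero.1 (ENNReal.tendsto_tsum_compl_atTop_zero hT)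
    (ε ^ 2) (by positivity)] with s hs
  rw [edist_comm, edist_eq_enorm_sub, ← ENNReal.pow_le_pow_left_iff two_ne_zero]
  calc ‖T - P s‖ₑ ^ 2 ≤ ∑' j, ‖(T - P s) (b j)‖ₑ ^ 2 := b.opENorm_sq_le_tsum_enorm_sq _
    _ = ∑' j : {j // j ∉ s}, ‖T (b j)‖ₑ ^ 2 := by
      refine Eq.trans ?_ (tsum_subtype ((s : Set ι)ᶜ) fun j => ‖T (b j)‖ₑ ^ 2).symm
      congr 1 with j
      by_cases hj : j ∈ s <;> simp [hP, hj]
    _ ≤ ε ^ 2 := hs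

theorem tsum_inner_adjoint_comp_self (b : HilbertBasis ι ℝ E) (A : E →L[ℝ] F) :
    ∑' i, ⟪b i, (adjoint A ∘L A) (b i)⟫ = (∑' i, ‖A (b i)‖ₑ ^ 2).toReal := by
  simp_rw [← tsum_norm_sq_eq_toReal_tsum_enorm_sq, apply_norm_sq_eq_inner_adjoint_right,
    RCLike.re_to_real]

theorem summable_inner_adjoint_comp_self (b : HilbertBasis ι ℝ E) (A : E →L[ℝ] F)
    (hA : ∑' i, ‖A (b i)‖ₑ ^ 2 ≠ ∞) : Summable fun i => ⟪b i, (adjoint A ∘L A) (b i)⟫ := by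
  refine (ENNReal.summable_toReal hA).congr fun i => ?_
  rw [ENNReal.toReal_pow, toReal_enorm, apply_norm_sq_eq_inner_adjoint_right,
    RCLike.re_to_real]

theorem summable_inner_comp_adjoint (b : HilbertBasis ι ℝ E) (c : HilbertBasis κ ℝ F)
    (A : E →L[ℝ] F) (hA : ∑' i, ‖A (b i)‖ₑ ^ 2 ≠ ∞) :
    Summable fun j => ⟪c j, (A ∘L adjoint A) (c j)⟫ := by
  simpa only [adjoint_adjoint] using
    c.summable_inner_adjoint_comp_self (adjoint A) (by rwa [b.tsum_enorm_adjoint_apply_sq c])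

theorem tsum_inner_adjoint_comp_self_eq_tsum_inner_comp_adjoint (b : HilbertBasis ι ℝ E)
    (c : HilbertBasis κ ℝ F) (A : E →L[ℝ] F) :
    ∑' i, ⟪b i, (adjoint A ∘L A) (b i)⟫ = ∑' j, ⟪c j, (A ∘L adjoint A) (c j)⟫ := by
  have hc := c.tsum_inner_adjoint_comp_self (adjoint A)
  rw [adjoint_adjoint] at hc
  rw [b.tsum_inner_adjoint_comp_self, hc, b.tsum_enorm_adjoint_apply_sq c]

end HilbertBasis

section Lebesgue

variable {α : Type*} [MeasurableSpace α] {μ : Measure α}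

theorem MeasureTheory.Lp.enorm_sq_eq_lintegral {E : Type*} [NormedAddCommGroup E]
    (f : Lp E 2 μ) : ‖f‖ₑ ^ 2 = ∫⁻ x, ‖f x‖ₑ ^ 2 ∂μ := by
  have := eLpNorm_nnreal_pow_eq_lintegral (f := f) (μ := μ) (p := 2) two_ne_zero
  simp only [NNReal.coe_ofNat, ENNReal.rpow_two, ENNReal.coe_ofNat] at this
  rw [Lp.enorm_def, this]

theorem tsum_lintegral_le_lintegral_tsum {ι : Type*} {f : ι → α → ℝ≥0∞}
    (hf : ∀ i, AEMeasurable (f i) μ) : ∑' i, ∫⁻ x, f i x ∂μ ≤ ∫⁻ x, ∑' i, f i x ∂μ := by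
  rw [ENNReal.tsum_eq_iSup_sum]
  refine iSup_le fun s => ?_
  rw [← lintegral_finsetSum' s fun i _ => hf i]
  exact lintegral_mono fun x => ENNReal.sum_le_tsum s

theorem MeasureTheory.L2.inner_toLp_eq_integral {g : α → ℝ} (hg : MemLp g 2 μ)
    (f : Lp ℝ 2 μ) : ⟪hg.toLp g, f⟫ = ∫ y, g y * f y ∂μ := by
  rw [L2.inner_def]
  refine integral_congr_ae ?_
  filter_upwards [hg.coeFn_toLp] with y hy
  simp [hy, mul_comm]

theorem HilbertBasis.tsum_enorm_sq_le_lintegral_kernel {ι : Type*}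
    (b : HilbertBasis ι ℝ (Lp ℝ 2 μ)) {K : α → α → ℝ} (hK : ∀ x, MemLp (K x) 2 μ)
    (A : Lp ℝ 2 μ →L[ℝ] Lp ℝ 2 μ) (hA : ∀ f, A f =ᵐ[μ] fun x => ∫ y, K x y * f y ∂μ) :
    ∑' i, ‖A (b i)‖ₑ ^ 2 ≤ ∫⁻ x, ∫⁻ y, ‖K x y‖ₑ ^ 2 ∂μ ∂μ := by
  have hAK : ∀ f, A f =ᵐ[μ] fun x => ⟪(hK x).toLp (K x), f⟫ := fun f => by
    simpa only [L2.inner_toLp_eq_integral] using hA f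
  calc ∑' i, ‖A (b i)‖ₑ ^ 2 = ∑' i, ∫⁻ x, ‖⟪b i, (hK x).toLp (K x)⟫‖ₑ ^ 2 ∂μ := by
        refine tsum_congr fun i => ?_
        rw [Lp.enorm_sq_eq_lintegral]
        refine lintegral_congr_ae ?_
        filter_upwards [hAK (b i)] with x hx
        rw [hx, real_inner_comm]
    -- `ι` may be uncountable, so `∑'` and `∫⁻` can only be exchanged as an inequality
    _ ≤ ∫⁻ x, ∑' i, ‖⟪b i, (hK x).toLp (K x)⟫‖ₑ ^ 2 ∂μ := by
        refine tsum_lintegral_le_lintegral_tsum fun i => ?_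
        simp_rw [real_inner_comm _ (b i)]
        exact ((Lp.aestronglyMeasurable (A (b i))).congr
          (hAK (b i))).aemeasurable.enorm.pow_const 2
    _ = ∫⁻ x, ∫⁻ y, ‖K x y‖ₑ ^ 2 ∂μ ∂μ := by
        refine lintegral_congr fun x => ?_
        rw [b.tsum_enorm_inner_sq, Lp.enorm_sq_eq_lintegral]
        refine lintegral_congr_ae ?_
        filter_upwards [(hK x).coeFn_toLp] with y hy
        rw [hy]

theorem ae_mem_of_withDensity_restrict {s : Set α} (hs : MeasurableSet s) (f : α → ℝ≥0∞) :
    ∀ᵐ x ∂(μ.restrict s).withDensity f, x ∈ s :=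
  (withDensity_absolutelyContinuous _ _).ae_le (ae_restrict_mem hs)

end Lebesgue

theorem ContinuousOn.exists_continuous_eqOn_Icc_s2 {α β : Type*} [LinearOrder α]
    [TopologicalSpace α] [OrderTopology α] [TopologicalSpace β] {f : α → β} {a b : α}
    (hf : ContinuousOn f (Icc a b)) (hab : a ≤ b) :
    ∃ g : α → β, Continuous g ∧ EqOn g f (Icc a b) ∧ ∀ x, g x ∈ f '' Icc a b :=
  ⟨IccExtend hab ((Icc a b).domRestrict f), continuous_IccExtend_iff.2 hf.domRestrict,
    fun _ hx => IccExtend_of_mem hab _ hx, fun x => ⟨_, (projIcc a b hab x).2, rfl⟩⟩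

theorem integral_mul_exp_neg_integral_le {σ : ℝ → ℝ} (hσ : Continuous σ) {c : ℝ} (hc : 0 < c)
    (a b : ℝ) : ∫ x in a..b, σ x * exp (-c * ∫ z in a..x, σ z) ≤ 1 / c := by
  have hderiv : ∀ x, HasDerivAt (fun x => -(1 / c) * exp (-c * ∫ z in a..x, σ z))
      (σ x * exp (-c * ∫ z in a..x, σ z)) x := fun x => by
    have hprim : HasDerivAt (fun u => ∫ z in a..u, σ z) (σ x) x :=
      (hσ.integral_hasStrictDerivAt a x).hasDerivAt
    refine ((hprim.const_mul (-c)).exp.const_mul (-(1 / c))).congr_deriv ?_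
    field_simp
  have hcont : Continuous fun x => σ x * exp (-c * ∫ z in a..x, σ z) :=
    hσ.mul (continuous_exp.comp (continuous_const.mul
      (continuous_primitive (fun _ _ => hσ.intervalIntegrable _ _) a)))
  rw [integral_eq_sub_of_hasDerivAt (fun x _ => hderiv x) (hcont.intervalIntegrable _ _)]
  simp only [integral_same, mul_zero, exp_zero]
  have := exp_pos (-c * ∫ z in a..b, σ z)
  have : 0 < 1 / c := by positivity
  nlinarith

theorem inv_two_mul_withDensity_Icc_univ_le {μ a b : ℝ} {σ : ℝ → ℝ} (hμ : 0 < μ)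
    (hab : a ≤ b) (hσ : ContinuousOn σ (Icc a b)) (hσ0 : ∀ x ∈ Icc a b, 0 < σ x) :
    ENNReal.ofReal (1 / (2 * μ)) *
        (volume.restrict (Icc a b)).withDensity (fun x => ENNReal.ofReal (σ x)) univ ≤
      ENNReal.ofReal (1 / μ * |b - a| * sSup (σ '' Icc a b) ^ 2 *
        sSup ((fun x => (σ x)⁻¹) '' Icc a b)) := by
  set M := sSup (σ '' Icc a b)
  set S := sSup ((fun x => (σ x)⁻¹) '' Icc a b)
  have ha : a ∈ Icc a b := left_mem_Icc.2 hab
  have hσM : ∀ x ∈ Icc a b, σ x ≤ M := fun x hx =>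
    le_csSup (isCompact_Icc.image_of_continuousOn hσ).bddAbove ⟨x, hx, rfl⟩
  have hS : (σ a)⁻¹ ≤ S :=
    le_csSup (isCompact_Icc.image_of_continuousOn
      (hσ.inv₀ fun x hx => (hσ0 x hx).ne')).bddAbove ⟨a, ha, rfl⟩
  have hM0 : 0 < M := (hσ0 a ha).trans_le (hσM a ha)
  have hMS : 1 ≤ M * S := calc
    1 = σ a * (σ a)⁻¹ := (mul_inv_cancel₀ (hσ0 a ha).ne').symm
    _ ≤ M * S := mul_le_mul (hσM a ha) hS (inv_pos.2 (hσ0 a ha)).le hM0.le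
  have hν : (volume.restrict (Icc a b)).withDensity (fun x => ENNReal.ofReal (σ x)) univ ≤
      ENNReal.ofReal (M * (b - a)) := by
    rw [withDensity_apply _ MeasurableSet.univ, Measure.restrict_univ,
      ENNReal.ofReal_mul' (sub_nonneg.2 hab), ← Real.volume_Icc, ← setLIntegral_const]
    exact setLIntegral_mono measurable_const fun x hx => ENNReal.ofReal_le_ofReal (hσM x hx)
  calc _ ≤ ENNReal.ofReal (1 / (2 * μ)) * ENNReal.ofReal (M * (b - a)) := by gcongr
    _ = ENNReal.ofReal (1 / μ * (b - a) * M * (1 / 2)) := by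
      rw [← ENNReal.ofReal_mul (by positivity)]
      congr 1
      ring
    _ ≤ ENNReal.ofReal (1 / μ * |b - a| * M ^ 2 * S) := by
      refine ENNReal.ofReal_le_ofReal ?_
      have : 0 ≤ 1 / μ * (b - a) * M :=
        mul_nonneg (mul_nonneg (by positivity) (sub_nonneg.2 hab)) hM0.le
      rw [abs_of_nonneg (sub_nonneg.2 hab)]
      nlinarith

noncomputable def transportKernel (μ : ℝ) (σ q : ℝ → ℝ) (x y : ℝ) : ℝ :=
  if y ≤ x then 1 / μ * exp (-(1 / μ) * ∫ z in y..x, σ z) * q y else 0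

section transportKernel

variable {μ : ℝ} {σ q : ℝ → ℝ}

theorem transportKernel_congr_of_mem_Icc {σ' q' : ℝ → ℝ} {a b x y : ℝ}
    (hσ : EqOn σ σ' (Icc a b)) (hq : EqOn q q' (Icc a b)) (hx : x ∈ Icc a b)
    (hy : y ∈ Icc a b) : transportKernel μ σ q x y = transportKernel μ σ' q' x y := by
  unfold transportKernel
  split_ifs
  · rw [hq hy, integral_congr (hσ.mono (uIcc_subset_Icc hy hx))]
  · rfl

theorem abs_transportKernel_le (hμ : 0 < μ) (hσ : ∀ z, 0 ≤ σ z) (hq : ∀ y, |q y| ≤ 1)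
    (x y : ℝ) : |transportKernel μ σ q x y| ≤ 1 / μ := by
  unfold transportKernel
  split_ifs with hyx
  · have hexp : exp (-(1 / μ) * ∫ z in y..x, σ z) ≤ 1 := by
      rw [exp_le_one_iff, neg_mul, neg_nonpos]
      exact mul_nonneg (by positivity) (integral_nonneg hyx fun z _ => hσ z)
    rw [abs_mul, abs_mul, abs_of_pos (by positivity : 0 < 1 / μ), abs_of_pos (exp_pos _)]
    calc 1 / μ * exp (-(1 / μ) * ∫ z in y..x, σ z) * |q y| ≤ 1 / μ * 1 * 1 := by
          gcongr
          exact hq y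
      _ = 1 / μ := by ring
  · simp [hμ.le]

theorem transportKernel_sq_le (hq : ∀ y, |q y| ≤ 1) (x y : ℝ) :
    transportKernel μ σ q x y ^ 2 ≤
      (Ici y).indicator (fun x => 1 / μ ^ 2 * exp (-(2 / μ) * ∫ z in y..x, σ z)) x := by
  unfold transportKernel
  split_ifs with hyx
  · rw [indicator_of_mem (mem_Ici.2 hyx)]
    have hexp : exp (-(1 / μ) * ∫ z in y..x, σ z) ^ 2 =
        exp (-(2 / μ) * ∫ z in y..x, σ z) := by
      rw [← exp_nat_mul]
      ring_nf
    have hq2 : q y ^ 2 ≤ 1 := (sq_le_one_iff_abs_le_one _).2 (hq y)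
    calc (1 / μ * exp (-(1 / μ) * ∫ z in y..x, σ z) * q y) ^ 2
        = 1 / μ ^ 2 * exp (-(2 / μ) * ∫ z in y..x, σ z) * q y ^ 2 := by rw [← hexp]; ring
      _ ≤ 1 / μ ^ 2 * exp (-(2 / μ) * ∫ z in y..x, σ z) * 1 := by gcongr
      _ = _ := mul_one _
  · simp [indicator_of_notMem (show x ∉ Ici y from hyx)]

theorem measurable_transportKernel (hσ : Continuous σ) (hq : Measurable q) :
    Measurable (Function.uncurry (transportKernel μ σ q)) := by
  set G : ℝ → ℝ := fun t => ∫ z in 0..t, σ z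
  have hG : Continuous G := continuous_primitive (fun _ _ => hσ.intervalIntegrable _ _) 0
  have hK : Function.uncurry (transportKernel μ σ q) = fun p : ℝ × ℝ =>
      if p.2 ≤ p.1 then 1 / μ * exp (-(1 / μ) * (G p.1 - G p.2)) * q p.2 else 0 := by
    ext ⟨x, y⟩
    simp only [Function.uncurry_apply_pair, transportKernel, G,
      integral_interval_sub_left (hσ.intervalIntegrable 0 x) (hσ.intervalIntegrable 0 y)]
  rw [hK]
  refine Measurable.ite (measurableSet_le measurable_snd measurable_fst) ?_ measurable_const
  exact (by fun_prop : Continuous fun p : ℝ × ℝ =>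
    1 / μ * exp (-(1 / μ) * (G p.1 - G p.2))).measurable.mul (hq.comp measurable_snd)

theorem setLIntegral_mul_transportKernel_sq_le (hμ : 0 < μ) (hσ : Continuous σ)
    (hσ0 : ∀ z, 0 ≤ σ z) (hq : ∀ y, |q y| ≤ 1) {a b y : ℝ} (hy : y ≤ b) :
    ∫⁻ x in Icc a b, ENNReal.ofReal (σ x) * ‖transportKernel μ σ q x y‖ₑ ^ 2 ≤
      ENNReal.ofReal (1 / (2 * μ)) := by
  set g : ℝ → ℝ := fun x => 1 / μ ^ 2 * (σ x * exp (-(2 / μ) * ∫ z in y..x, σ z))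
  have hg : Continuous g := continuous_const.mul (hσ.mul (continuous_exp.comp
    (continuous_const.mul (continuous_primitive (fun _ _ => hσ.intervalIntegrable _ _) y))))
  have hg0 : ∀ x, 0 ≤ g x := fun x =>
    mul_nonneg (by positivity) (mul_nonneg (hσ0 x) (exp_pos _).le)
  have hpointwise : ∀ x, ENNReal.ofReal (σ x) * ‖transportKernel μ σ q x y‖ₑ ^ 2 ≤
      (Ici y).indicator (fun x => ENNReal.ofReal (g x)) x := fun x => by
    rw [← enorm_pow, Real.enorm_of_nonneg (sq_nonneg _), ← ENNReal.ofReal_mul (hσ0 x)]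
    have hK := mul_le_mul_of_nonneg_left
      (transportKernel_sq_le (μ := μ) (σ := σ) hq x y) (hσ0 x)
    by_cases hx : x ∈ Ici y
    · simp only [indicator_of_mem hx] at hK ⊢
      exact ENNReal.ofReal_le_ofReal (hK.trans_eq (by ring))
    · simp only [indicator_of_notMem hx, mul_zero] at hK ⊢
      simp [ENNReal.ofReal_eq_zero.2 hK]
  calc ∫⁻ x in Icc a b, ENNReal.ofReal (σ x) * ‖transportKernel μ σ q x y‖ₑ ^ 2
      ≤ ∫⁻ x in Icc a b, (Ici y).indicator (fun x => ENNReal.ofReal (g x)) x :=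
        lintegral_mono hpointwise
    _ ≤ ∫⁻ x in Icc y b, ENNReal.ofReal (g x) := by
        rw [setLIntegral_indicator measurableSet_Ici]
        exact lintegral_mono_set fun x hx => ⟨hx.1, hx.2.2⟩
    _ = ENNReal.ofReal (∫ x in y..b, g x) := by
        rw [integral_of_le hy, ← integral_Icc_eq_integral_Ioc,
          ofReal_integral_eq_lintegral_ofReal hg.integrableOn_Icc (.of_forall hg0)]
    _ ≤ ENNReal.ofReal (1 / (2 * μ)) := by
        refine ENNReal.ofReal_le_ofReal ?_
        calc ∫ x in y..b, g x ≤ 1 / μ ^ 2 * (1 / (2 / μ)) := by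
              rw [intervalIntegral.integral_const_mul]
              gcongr
              exact integral_mul_exp_neg_integral_le hσ (by positivity) y b
          _ = 1 / (2 * μ) := by field_simp

theorem tsum_enorm_sq_le_of_transportKernel_of_continuous {ι : Type*} (hμ : 0 < μ)
    (hσ : Continuous σ) (hσ0 : ∀ z, 0 ≤ σ z) (hq : Continuous q) (hq1 : ∀ y, |q y| ≤ 1)
    {a b : ℝ} {ν : Measure ℝ}
    (hν : ν = (volume.restrict (Icc a b)).withDensity fun x => ENNReal.ofReal (σ x))
    (A : Lp ℝ 2 ν →L[ℝ] Lp ℝ 2 ν)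
    (hA : ∀ f, A f =ᵐ[ν] fun x => ∫ y, transportKernel μ σ q x y * f y ∂ν)
    (e : HilbertBasis ι ℝ (Lp ℝ 2 ν)) :
    ∑' i, ‖A (e i)‖ₑ ^ 2 ≤ ENNReal.ofReal (1 / (2 * μ)) * ν univ := by
  have : IsFiniteMeasure ν :=
    hν ▸ isFiniteMeasure_withDensity_ofReal hσ.integrableOn_Icc.hasFiniteIntegral
  have hK := measurable_transportKernel (μ := μ) hσ hq.measurable
  have hK2 : ∀ x, MemLp (transportKernel μ σ q x) 2 ν := fun x =>
    .of_bound (hK.comp measurable_prodMk_left).aestronglyMeasurable (1 / μ)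
      (.of_forall fun y => abs_transportKernel_le hμ hσ0 hq1 x y)
  calc ∑' i, ‖A (e i)‖ₑ ^ 2
      ≤ ∫⁻ x, ∫⁻ y, ‖transportKernel μ σ q x y‖ₑ ^ 2 ∂ν ∂ν :=
        e.tsum_enorm_sq_le_lintegral_kernel hK2 A hA
    _ = ∫⁻ y, ∫⁻ x, ‖transportKernel μ σ q x y‖ₑ ^ 2 ∂ν ∂ν :=
        lintegral_lintegral_swap (hK.enorm.pow_const 2).aemeasurable
    _ ≤ ∫⁻ _, ENNReal.ofReal (1 / (2 * μ)) ∂ν := by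
        refine lintegral_mono_ae ?_
        filter_upwards [hν ▸ ae_mem_of_withDensity_restrict measurableSet_Icc _] with y hy
        have hKy : Measurable fun x => ‖transportKernel μ σ q x y‖ₑ ^ 2 :=
          (hK.comp measurable_prodMk_right).enorm.pow_const 2
        rw [hν, lintegral_withDensity_eq_lintegral_mul _ (by fun_prop) hKy]
        exact setLIntegral_mul_transportKernel_sq_le hμ hσ hσ0 hq1 hy.2
    _ = ENNReal.ofReal (1 / (2 * μ)) * ν univ := lintegral_const _

theorem tsum_enorm_sq_le_of_transportKernel {ι : Type*} (hμ : 0 < μ) {a b : ℝ}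
    (hab : a ≤ b) (hσ : ContinuousOn σ (Icc a b)) (hσ0 : ∀ x ∈ Icc a b, 0 ≤ σ x)
    (hq : ContinuousOn q (Icc a b)) (hq1 : ∀ y ∈ Icc a b, |q y| ≤ 1) {ν : Measure ℝ}
    (hν : ν = (volume.restrict (Icc a b)).withDensity fun x => ENNReal.ofReal (σ x))
    (A : Lp ℝ 2 ν →L[ℝ] Lp ℝ 2 ν)
    (hA : ∀ f, A f =ᵐ[ν] fun x => ∫ y, transportKernel μ σ q x y * f y ∂ν)
    (e : HilbertBasis ι ℝ (Lp ℝ 2 ν)) :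
    ∑' i, ‖A (e i)‖ₑ ^ 2 ≤ ENNReal.ofReal (1 / (2 * μ)) * ν univ := by
  -- extend `σ` and `q` continuously from `[a, b]`; this changes neither `ν` nor the kernel
  -- on `[a, b]²`
  obtain ⟨s, hs, hs_eq, hs_mem⟩ := hσ.exists_continuous_eqOn_Icc_s2 hab
  obtain ⟨r, hr, hr_eq, hr_mem⟩ := hq.exists_continuous_eqOn_Icc_s2 hab
  have hIcc : ∀ᵐ x ∂ν, x ∈ Icc a b :=
    hν ▸ ae_mem_of_withDensity_restrict measurableSet_Icc _
  refine tsum_enorm_sq_le_of_transportKernel_of_continuous hμ hs (fun x => ?_) hr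
    (fun y => ?_) (hν.trans (withDensity_congr_ae ?_)) A (fun f => ?_) e
  · obtain ⟨y, hy, hsy⟩ := hs_mem x
    exact hsy ▸ hσ0 y hy
  · obtain ⟨x, hx, hrx⟩ := hr_mem y
    exact hrx ▸ hq1 x hx
  · filter_upwards [ae_restrict_mem measurableSet_Icc] with x hx
    rw [hs_eq hx]
  · filter_upwards [hA f, hIcc] with x hAx hx
    rw [hAx]
    refine integral_congr_ae ?_
    filter_upwards [hIcc] with y hy
    rw [transportKernel_congr_of_mem_Icc hs_eq.symm hr_eq.symm hx hy]

end transportKernel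

/-- the integral operator `A_μ` on `L²([x_L,x_R]; σ_T dx)` with kernel
`k_μ(x,y) = (1/μ) 1_{y≤x} exp(-(1/μ)∫_y^x σ_T) σ_r(y)/σ_T(y)` is compact, `A_μ*A_μ`
and `A_μA_μ*` are trace class with equal traces, and
`tr(A_μ*A_μ) ≤ (1/μ)|x_R-x_L| ‖σ_T‖_∞² ‖σ_T⁻¹‖_∞`. -/
theorem stmt2 (xL xR : ℝ) (hx : xL < xR) (μ : ℝ) (hμ : 0 < μ)
    (σT σr : ℝ → ℝ)
    (hσT : ContinuousOn σT (Set.Icc xL xR))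
    (hσr : ContinuousOn σr (Set.Icc xL xR))
    (hposr : ∀ x ∈ Set.Icc xL xR, 0 < σr x)
    (hle : ∀ x ∈ Set.Icc xL xR, σr x ≤ σT x)
    (k : ℝ → ℝ → ℝ)
    (hk : ∀ x y, k x y =
      (if y ≤ x then (1 / μ) * Real.exp (-(1 / μ) * ∫ z in y..x, σT z) * (σr y / σT y)
       else 0))
    -- the weighted measure `σ_T dx` on `[x_L, x_R]`
    (ν : Measure ℝ)
    (hν : ν = (volume.restrict (Set.Icc xL xR)).withDensity
      (fun x => ENNReal.ofReal (σT x)))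
    -- `A` is the integral operator with kernel `k` on `L²(ν)`
    (A : Lp ℝ 2 ν →L[ℝ] Lp ℝ 2 ν)
    (hA : ∀ f : Lp ℝ 2 ν, (A f : ℝ → ℝ) =ᵐ[ν] fun x => ∫ y, k x y * f y ∂ν) :
    IsCompactOperator A ∧
    ∀ (ι : Type) (b : HilbertBasis ι ℝ (Lp ℝ 2 ν)),
      Summable (fun i => ⟪b i, ((ContinuousLinearMap.adjoint A) ∘L A) (b i)⟫) ∧
      Summable (fun i => ⟪b i, (A ∘L (ContinuousLinearMap.adjoint A)) (b i)⟫) ∧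
      (∑' i, ⟪b i, ((ContinuousLinearMap.adjoint A) ∘L A) (b i)⟫) =
        (∑' i, ⟪b i, (A ∘L (ContinuousLinearMap.adjoint A)) (b i)⟫) ∧
      (∑' i, ⟪b i, ((ContinuousLinearMap.adjoint A) ∘L A) (b i)⟫) ≤
        (1 / μ) * |xR - xL| * (sSup (σT '' Set.Icc xL xR)) ^ 2 *
          sSup ((fun x => (σT x)⁻¹) '' Set.Icc xL xR) := by
  obtain rfl : k = transportKernel μ σT (σr / σT) := funext fun x => funext (hk x)
  have hσT0 : ∀ x ∈ Icc xL xR, 0 < σT x := fun x hx => (hposr x hx).trans_le (hle x hx)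
  have hq1 : ∀ y ∈ Icc xL xR, |(σr / σT) y| ≤ 1 := fun y hy => by
    rw [Pi.div_apply, abs_of_pos (div_pos (hposr y hy) (hσT0 y hy))]
    exact div_le_one_of_le₀ (hle y hy) (hσT0 y hy).le
  have hHS : ∀ (ι : Type) (b : HilbertBasis ι ℝ (Lp ℝ 2 ν)), ∑' i, ‖A (b i)‖ₑ ^ 2 ≤
      ENNReal.ofReal (1 / μ * |xR - xL| * sSup (σT '' Icc xL xR) ^ 2 *
        sSup ((fun x => (σT x)⁻¹) '' Icc xL xR)) := fun ι b =>
    (tsum_enorm_sq_le_of_transportKernel hμ hx.le hσT (fun x hx => (hσT0 x hx).le)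
      (hσr.div hσT fun x hx => (hσT0 x hx).ne') hq1 hν A hA b).trans
      (hν ▸ inv_two_mul_withDensity_Icc_univ_le hμ hx.le hσT hσT0)
  obtain ⟨w, b₀, -⟩ := exists_hilbertBasis ℝ (Lp ℝ 2 ν)
  refine ⟨b₀.isCompactOperator_of_tsum_enorm_sq_ne_top A
    (ne_top_of_le_ne_top ENNReal.ofReal_ne_top (hHS w b₀)), fun ι b => ?_⟩
  have hfin := ne_top_of_le_ne_top ENNReal.ofReal_ne_top (hHS ι b)
  have hS : 0 ≤ sSup ((fun x => (σT x)⁻¹) '' Icc xL xR) :=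
    Real.sSup_nonneg (by rintro _ ⟨x, hx, rfl⟩; exact (inv_pos.2 (hσT0 x hx)).le)
  refine ⟨b.summable_inner_adjoint_comp_self A hfin, b.summable_inner_comp_adjoint b A hfin,
    b.tsum_inner_adjoint_comp_self_eq_tsum_inner_comp_adjoint b A, ?_⟩
  rw [b.tsum_inner_adjoint_comp_self]
  exact ENNReal.toReal_le_of_le_ofReal (mul_nonneg (by positivity) hS) (hHS ι b)
end
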